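/- For every y ∈ ℤ: U_{μ^{Root}_T}(y) = E_y[U_{μ^{Root}}(Y_{τ*}) 1_{τ* < T} + U_λ(Y_{τ*}) 1_{τ* = T}], where E_y denotes expectation for Y started at Y_0 = y. -/

import Mathlib

open MeasureTheory ProbabilityTheory

noncomputable section

namespace SwitchingIdentities

variable {Ω : Type*} [MeasurableSpace Ω]

/-- The increment `ξ` has the fair `±1` law. -/
def FairSign (P : Measure Ω) (ξ : Ω → ℤ) : Prop :=
  P {ω | ξ ω = 1} = 1 / 2 ∧ P {ω | ξ ω = -1} = 1 / 2

/-- `ξ` and `η` are the increment families of two independent simple symmetric random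
walks on `ℤ`: all increments are measurable, fair `±1` coins, and the whole family
`(ξ₀, ξ₁, …, η₀, η₁, …)` is independent. -/
def IndepSSRWIncrements (P : Measure Ω) (ξ η : ℕ → Ω → ℤ) : Prop :=
  (∀ n, Measurable (ξ n)) ∧ (∀ n, Measurable (η n)) ∧
  (∀ n, FairSign P (ξ n)) ∧ (∀ n, FairSign P (η n)) ∧
  iIndepFun (Sum.elim ξ η) P

/-- The random walk with increments `ξ` started at `x`. -/
def walk (ξ : ℕ → Ω → ℤ) (x : ℤ) (t : ℕ) (ω : Ω) : ℤ :=
  x + ∑ i ∈ Finset.range t, ξ i ω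

/-- A Root continuation set: if `(t,m) ∈ D` then `(s,m) ∈ D` for all `s < t`. -/
def IsRootCont {α : Type*} (D : Set (ℕ × α)) : Prop :=
  ∀ t m, (t, m) ∈ D → ∀ s, s < t → (s, m) ∈ D

/-- A Rost continuation set: if `(t,m) ∈ D` then `(s,m) ∈ D` for all `s > t`. -/
def IsRostCont {α : Type*} (D : Set (ℕ × α)) : Prop :=
  ∀ t m, (t, m) ∈ D → ∀ s, t < s → (s, m) ∈ D

/-- `hit D Z ω = inf {t : (t, Z_t) ∉ D}` (junk value `0` if the walk never leaves `D`). -/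
def hit {α : Type*} (D : Set (ℕ × α)) (Z : ℕ → Ω → α) (ω : Ω) : ℕ :=
  sInf {t | (t, Z t ω) ∉ D}

/-- `hitBy D Z n ω = inf {t : (t, Z_t) ∉ D} ∧ n` (equal to `n` if the walk never leaves `D`). -/
def hitBy {α : Type*} (D : Set (ℕ × α)) (Z : ℕ → Ω → α) (n : ℕ) (ω : Ω) : ℕ :=
  sInf ({t | (t, Z t ω) ∉ D} ∪ {n})

/-- `revHitBy D Z T ω = inf {t : (T − t, Z_t) ∉ D} ∧ T`, the exit time of the time-reversed
space-time walk, capped at `T`. -/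
def revHitBy {α : Type*} (D : Set (ℕ × α)) (Z : ℕ → Ω → α) (T : ℕ) (ω : Ω) : ℕ :=
  sInf ({t | (T - t, Z t ω) ∉ D} ∪ {T})

/-- The potential function `U_m(z) = −∑_x |z − x| m({x})` of a measure `m` on `ℤ`. -/
def potential (m : Measure ℤ) (z : ℤ) : ℝ :=
  -∑' w : ℤ, (|z - w| : ℤ) * (m {w}).toReal

/-- A measure on `ℤ` has a finite first moment. -/
def FiniteFirstMoment (m : Measure ℤ) : Prop :=
  Integrable (fun z : ℤ => (z : ℝ)) m

/-- `τ` is a stopping time of the natural filtration of the process `Z`: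
`{τ ≤ n} ∈ σ(Z_0, …, Z_n)` for every `n`. -/
def IsNatStopping {α : Type*} [MeasurableSpace α] (Z : ℕ → Ω → α) (τ : Ω → ℕ) : Prop :=
  ∀ n : ℕ,
    MeasurableSet[MeasurableSpace.comap (fun ω => (fun i : Fin (n + 1) => Z i ω)) inferInstance]
      {ω | τ ω ≤ n}

/-- The law `μ^{Root}` of `X_{ρ^{Root}}` where `X` has increments `ξ` and `X_0 ∼ λ`. -/
def muRoot (P : Measure Ω) (ξ : ℕ → Ω → ℤ) (D : Set (ℕ × ℤ)) (lam : Measure ℤ) : Measure ℤ :=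
  Measure.map (fun p : ℤ × Ω => walk ξ p.1 (hit D (walk ξ p.1) p.2) p.2) (lam.prod P)

/-- The law `μ^{Root}_T` of `X_{ρ^{Root} ∧ T}` where `X` has increments `ξ` and `X_0 ∼ λ`. -/
def muRootT (P : Measure Ω) (ξ : ℕ → Ω → ℤ) (D : Set (ℕ × ℤ)) (lam : Measure ℤ) (T : ℕ) :
    Measure ℤ :=
  Measure.map (fun p : ℤ × Ω => walk ξ p.1 (hitBy D (walk ξ p.1) T p.2) p.2) (lam.prod P)

/-!
Write `f t z := U_{μ^{Root}_t}(z)`. Conditioning on the last increment shows that `f` solves the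
backward discrete heat equation `f (t + 1) z = (f t (z + 1) + f t (z - 1)) / 2` at every
`(t + 1, z) ∈ D` (by the Root property the walk cannot have been stopped at `z` before time
`t + 1`), and that `f t z` stops changing in `t` once `(t, z) ∉ D`; by uniform integrability the
frozen value is `U_{μ^{Root}}(z)`. Hence `f (T - s) (Y s)` is a martingale as long as the reversed
space-time walk stays in `D`, and optional stopping at `τ*` gives the identity: the boundary values
are `U_{μ^{Root}}` outside `D` and `f 0 = U_λ` at `τ* = T`.
-/

open Filter Topology

theorem IsRootCont.mem_of_le {α : Type*} {D : Set (ℕ × α)} (hD : IsRootCont D) {t s : ℕ} {m : α}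
    (h : (t, m) ∈ D) (hst : s ≤ t) : (s, m) ∈ D :=
  hst.eq_or_lt.elim (fun hst => hst ▸ h) (hD t m h s)

section HittingTimes

variable {Ω α : Type*} {D : Set (ℕ × α)} {Z Z' : ℕ → Ω → α} {ω ω' : Ω} {T : ℕ}

theorem sInf_union_singleton_congr {S S' : Set ℕ} (h : ∀ t ≤ T, t ∈ S ↔ t ∈ S') :
    sInf (S ∪ {T}) = sInf (S' ∪ {T}) := by
  have key : ∀ {S S' : Set ℕ}, (∀ t ≤ T, t ∈ S → t ∈ S') → sInf (S' ∪ {T}) ≤ sInf (S ∪ {T}) := by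
    intro S S' h
    refine Nat.sInf_le ?_
    rcases Nat.sInf_mem (⟨T, Or.inr rfl⟩ : (S ∪ {T}).Nonempty) with hm | hm
    · exact Or.inl (h _ (Nat.sInf_le (Or.inr rfl)) hm)
    · exact Or.inr hm
  exact le_antisymm (key fun t ht => (h t ht).2) (key fun t ht => (h t ht).1)

theorem sInf_union_singleton_of_mem {S : Set ℕ} {s : ℕ} (hs : s ∈ S) (hsT : s ≤ T) :
    sInf (S ∪ {T}) = sInf S := by
  rw [csInf_union (OrderBot.bddBelow S) ⟨s, hs⟩ (OrderBot.bddBelow _) (Set.singleton_nonempty T),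
    csInf_singleton]
  exact min_eq_left ((Nat.sInf_le hs).trans hsT)

def StaysIn (D : Set (ℕ × α)) (Z : ℕ → Ω → α) (T : ℕ) (ω : Ω) : Prop :=
  ∀ s ≤ T, (s, Z s ω) ∈ D

theorem staysIn_congr (h : ∀ t ≤ T, Z t ω = Z' t ω') : StaysIn D Z T ω ↔ StaysIn D Z' T ω' :=
  forall₂_congr fun s hs => by rw [h s hs]

theorem hitBy_le (T : ℕ) : hitBy D Z T ω ≤ T := Nat.sInf_le (Or.inr rfl)

theorem hitBy_congr (h : ∀ t ≤ T, Z t ω = Z' t ω') : hitBy D Z T ω = hitBy D Z' T ω' :=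
  sInf_union_singleton_congr fun t ht => by simp only [Set.mem_ofPred_eq, h t ht]

theorem hitBy_of_staysIn (h : StaysIn D Z T ω) : hitBy D Z T ω = T := by
  refine le_antisymm (hitBy_le T) (le_csInf ⟨T, Or.inr rfl⟩ ?_)
  rintro t (ht | rfl)
  · by_contra! hlt
    exact ht (h t hlt.le)
  · rfl

theorem hitBy_succ_of_staysIn (h : StaysIn D Z T ω) : hitBy D Z (T + 1) ω = T + 1 := by
  refine le_antisymm (hitBy_le _) (le_csInf ⟨_, Or.inr rfl⟩ ?_)
  rintro t (ht | rfl)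
  · by_contra! hlt
    exact ht (h t (by omega))
  · rfl

theorem hitBy_of_not_staysIn (h : ¬ StaysIn D Z T ω) :
    hitBy D Z T ω = hit D Z ω ∧ (hit D Z ω, Z (hit D Z ω) ω) ∉ D := by
  obtain ⟨s, hsT, hs⟩ : ∃ s ≤ T, (s, Z s ω) ∉ D := by simpa [StaysIn] using h
  exact ⟨sInf_union_singleton_of_mem hs hsT, Nat.sInf_mem (s := {t | (t, Z t ω) ∉ D}) ⟨s, hs⟩⟩

theorem hitBy_succ_of_not_staysIn (h : ¬ StaysIn D Z T ω) :
    hitBy D Z (T + 1) ω = hitBy D Z T ω := by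
  obtain ⟨s, hsT, hs⟩ : ∃ s ≤ T, (s, Z s ω) ∉ D := by simpa [StaysIn] using h
  rw [(hitBy_of_not_staysIn h).1]
  exact sInf_union_singleton_of_mem hs (by omega)

theorem hitBy_eq_hit (hne : ∃ t, (t, Z t ω) ∉ D) (hT : hit D Z ω ≤ T) :
    hitBy D Z T ω = hit D Z ω :=
  sInf_union_singleton_of_mem (Nat.sInf_mem hne) hT

theorem revHitBy_le (T : ℕ) : revHitBy D Z T ω ≤ T := Nat.sInf_le (Or.inr rfl)

theorem revHitBy_congr (h : ∀ t ≤ T, Z t ω = Z' t ω') :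
    revHitBy D Z T ω = revHitBy D Z' T ω' :=
  sInf_union_singleton_congr fun t ht => by simp only [Set.mem_ofPred_eq, h t ht]

theorem revHitBy_eq_zero (h : (T, Z 0 ω) ∉ D) : revHitBy D Z T ω = 0 :=
  Nat.eq_zero_of_le_zero (Nat.sInf_le (Or.inl (by simpa using h)))

theorem not_mem_of_revHitBy_lt (h : revHitBy D Z T ω < T) :
    (T - revHitBy D Z T ω, Z (revHitBy D Z T ω) ω) ∉ D := by
  rcases Nat.sInf_mem (⟨T, Or.inr rfl⟩ : ({t | (T - t, Z t ω) ∉ D} ∪ {T}).Nonempty) with hm | hm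
  · exact hm
  · exact absurd hm h.ne

theorem revHitBy_succ (h : (T + 1, Z 0 ω) ∈ D) :
    revHitBy D Z (T + 1) ω = revHitBy D (fun t => Z (t + 1)) T ω + 1 := by
  have hpos : 1 ≤ revHitBy D Z (T + 1) ω := by
    refine Nat.one_le_iff_ne_zero.2 fun h0 => ?_
    rcases Nat.sInf_eq_zero.1 h0 with (h0 | h0) | h0
    · exact h0 (by simpa using h)
    · exact absurd h0 (by simp)
    · exact Set.union_nonempty.2 (Or.inr (Set.singleton_nonempty _)) |>.ne_empty h0
  refine (Nat.sInf_add hpos).symm.trans ?_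
  congr 2
  ext t
  change t + 1 ∈ ({t | (T + 1 - t, Z t ω) ∉ D} ∪ {T + 1} : Set ℕ) ↔ _
  simp only [Set.mem_union, Set.mem_ofPred_eq, Set.mem_singleton_iff, Nat.add_sub_add_right,
    Nat.add_right_cancel_iff]

end HittingTimes

section Walks

variable {Ω : Type*} {ξ ξ' : ℕ → Ω → ℤ} {D : Set (ℕ × ℤ)} {ω ω' : Ω} {x : ℤ} {t T : ℕ}

@[simp] theorem walk_zero : walk ξ x 0 ω = x := by simp [walk]

theorem walk_succ : walk ξ x (t + 1) ω = walk ξ x t ω + ξ t ω := by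
  simp [walk, Finset.sum_range_succ, add_assoc]

theorem walk_succ' : walk ξ x (t + 1) ω = walk (fun i => ξ (i + 1)) (x + ξ 0 ω) t ω := by
  simp only [walk, Finset.sum_range_succ']
  ring

theorem walk_congr (h : ∀ i < t, ξ i ω = ξ' i ω') : walk ξ x t ω = walk ξ' x t ω' := by
  unfold walk
  rw [Finset.sum_congr rfl fun i hi => h i (Finset.mem_range.1 hi)]

theorem abs_walk_sub_le (h : ∀ i, ξ i ω = 1 ∨ ξ i ω = -1) : |walk ξ x t ω - x| ≤ t := by
  have habs : ∀ i, |ξ i ω| = 1 := fun i => by rcases h i with h | h <;> simp [h]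
  calc |walk ξ x t ω - x| = |∑ i ∈ Finset.range t, ξ i ω| := by simp [walk]
    _ ≤ ∑ i ∈ Finset.range t, |ξ i ω| := Finset.abs_sum_le_sum_abs _ _
    _ = t := by simp [habs]

def stoppedWalk (ξ : ℕ → Ω → ℤ) (D : Set (ℕ × ℤ)) (T : ℕ) (x : ℤ) (ω : Ω) : ℤ :=
  walk ξ x (hitBy D (walk ξ x) T ω) ω

def walkAtExit (ξ : ℕ → Ω → ℤ) (D : Set (ℕ × ℤ)) (x : ℤ) (ω : Ω) : ℤ :=
  walk ξ x (hit D (walk ξ x) ω) ω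

@[simp] theorem stoppedWalk_zero : stoppedWalk ξ D 0 x ω = x := by
  simp [stoppedWalk, Nat.le_zero.1 (hitBy_le 0)]

theorem stoppedWalk_of_staysIn (h : StaysIn D (walk ξ x) T ω) :
    stoppedWalk ξ D T x ω = walk ξ x T ω := by
  rw [stoppedWalk, hitBy_of_staysIn h]

theorem stoppedWalk_succ_of_staysIn (h : StaysIn D (walk ξ x) T ω) :
    stoppedWalk ξ D (T + 1) x ω = stoppedWalk ξ D T x ω + ξ T ω := by
  rw [stoppedWalk, hitBy_succ_of_staysIn h, walk_succ, stoppedWalk_of_staysIn h]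

theorem stoppedWalk_succ_of_not_staysIn (h : ¬ StaysIn D (walk ξ x) T ω) :
    stoppedWalk ξ D (T + 1) x ω = stoppedWalk ξ D T x ω := by
  rw [stoppedWalk, hitBy_succ_of_not_staysIn h, stoppedWalk]

theorem not_mem_of_not_staysIn (h : ¬ StaysIn D (walk ξ x) T ω) :
    (hitBy D (walk ξ x) T ω, stoppedWalk ξ D T x ω) ∉ D := by
  rw [stoppedWalk, (hitBy_of_not_staysIn h).1]
  exact (hitBy_of_not_staysIn h).2

theorem stoppedWalk_eq_walkAtExit (hne : ∃ t, (t, walk ξ x t ω) ∉ D)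
    (hT : hit D (walk ξ x) ω ≤ T) : stoppedWalk ξ D T x ω = walkAtExit ξ D x ω := by
  rw [stoppedWalk, hitBy_eq_hit hne hT, walkAtExit]

/- Functionals of a walk are read as functions of its increment path `u : ℕ → ℤ`:
`walk ξ x t ω` is definitionally `walk (fun i u => u i) x t (ξ · ω)`. -/
theorem walk_congr_of_forall_mem_range {u v : ℕ → ℤ} (h : ∀ i ∈ Finset.range T, u i = v i)
    (ht : t ≤ T) : walk (fun i (u : ℕ → ℤ) => u i) x t u = walk (fun i (u : ℕ → ℤ) => u i) x t v :=
  walk_congr fun i hi => h i (Finset.mem_range.2 (by omega))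

theorem dependsOn_staysIn :
    DependsOn (StaysIn D (walk (fun i (u : ℕ → ℤ) => u i) x) T) (Finset.range T) := fun _ _ h =>
  propext (staysIn_congr fun _ hs => walk_congr_of_forall_mem_range (by simpa using h) hs)

theorem dependsOn_stoppedWalk :
    DependsOn (stoppedWalk (fun i (u : ℕ → ℤ) => u i) D T x) (Finset.range T) := fun u v h => by
  have hw : ∀ s ≤ T, walk (fun i (u : ℕ → ℤ) => u i) x s u = walk (fun i u => u i) x s v :=
    fun s hs => walk_congr_of_forall_mem_range (by simpa using h) hs
  rw [stoppedWalk, stoppedWalk, hitBy_congr hw]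
  exact hw _ (hitBy_le T)

end Walks

theorem _root_.DependsOn.measurable_comp {ι β γ : Type*} [Countable β] [MeasurableSpace β]
    [MeasurableSingletonClass β] [MeasurableSpace γ] [Nonempty γ] {G : (ι → β) → γ}
    {S : Finset ι} (hG : DependsOn G S) {η : ι → Ω → β} (hη : ∀ i, Measurable (η i)) :
    Measurable fun ω => G (η · ω) := by
  obtain ⟨Φ, rfl⟩ := dependsOn_iff_exists_comp.1 hG
  exact (measurable_of_countable Φ).comp (measurable_pi_lambda _ fun i => hη i)

structure IsRademacherSeq (P : Measure Ω) (η : ℕ → Ω → ℤ) : Prop where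
  measurable : ∀ n, Measurable (η n)
  fairSign : ∀ n, FairSign P (η n)
  iIndepFun : iIndepFun η P

section Rademacher

variable {P : Measure Ω} {ξ η : ℕ → Ω → ℤ}

theorem IndepSSRWIncrements.isRademacherSeq_left (h : IndepSSRWIncrements P ξ η) :
    IsRademacherSeq P ξ :=
  ⟨h.1, h.2.2.1, h.2.2.2.2.precomp (g := Sum.inl) Sum.inl_injective⟩

theorem IndepSSRWIncrements.isRademacherSeq_right (h : IndepSSRWIncrements P ξ η) :
    IsRademacherSeq P η :=
  ⟨h.2.1, h.2.2.2.1, h.2.2.2.2.precomp (g := Sum.inr) Sum.inr_injective⟩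

theorem IsRademacherSeq.shift (hη : IsRademacherSeq P η) :
    IsRademacherSeq P (fun i => η (i + 1)) :=
  ⟨fun _ => hη.measurable _, fun _ => hη.fairSign _, hη.iIndepFun.precomp (add_left_injective 1)⟩

variable [IsProbabilityMeasure P]

theorem FairSign.ae_eq_one_or_neg_one {f : Ω → ℤ} (h : FairSign P f) (hf : Measurable f) :
    ∀ᵐ ω ∂P, f ω = 1 ∨ f ω = -1 := by
  have hdisj : Disjoint {ω | f ω = 1} {ω | f ω = -1} :=
    Set.disjoint_left.2 fun ω h1 h2 => by simp_all
  have hmeas : MeasurableSet {ω | f ω = -1} := hf (measurableSet_singleton _)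
  have hfull : P ({ω | f ω = 1} ∪ {ω | f ω = -1}) = P Set.univ := by
    rw [measure_union hdisj hmeas, h.1, h.2, ENNReal.add_halves, measure_univ]
  exact (ae_iff_measure_eq ((hf (measurableSet_singleton _)).union hmeas).nullMeasurableSet).2 hfull

theorem IsRademacherSeq.ae_sign (hη : IsRademacherSeq P η) :
    ∀ᵐ ω ∂P, ∀ i, η i ω = 1 ∨ η i ω = -1 :=
  ae_all_iff.2 fun i => (hη.fairSign i).ae_eq_one_or_neg_one (hη.measurable i)

theorem FairSign.integral_comp_eq_average {β : Type*} [MeasurableSpace β] {f : Ω → ℤ}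
    {g : Ω → β} (hfair : FairSign P f) (hf : Measurable f) (hg : Measurable g)
    (hind : IndepFun f g P) {Φ : ℤ → β → ℝ} (hΦ : ∀ e, Measurable (Φ e))
    (hint₁ : Integrable (fun ω => Φ 1 (g ω)) P) (hint₂ : Integrable (fun ω => Φ (-1) (g ω)) P) :
    ∫ ω, Φ (f ω) (g ω) ∂P = ∫ ω, (Φ 1 (g ω) + Φ (-1) (g ω)) / 2 ∂P := by
  have hA : ∀ e : ℤ, MeasurableSet {ω | f ω = e} := fun e => hf (measurableSet_singleton e)
  have hpiece : ∀ e : ℤ, ∫ ω in {ω | f ω = e}, Φ e (g ω) ∂P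
      = P.real {ω | f ω = e} * ∫ ω, Φ e (g ω) ∂P := fun e =>
    Indep.setIntegral_eq_mul hf.comap_le ((IndepFun_iff_Indep f g P).1 hind) hg.aemeasurable
      ⟨{e}, measurableSet_singleton e, rfl⟩ (hΦ e).aestronglyMeasurable
  have hhalf : ∀ e : ℤ, P {ω | f ω = e} = 1 / 2 → P.real {ω | f ω = e} = 1 / 2 := fun e he => by
    simp [measureReal_def, he]
  have hsplit : (fun ω => Φ (f ω) (g ω)) =ᵐ[P] fun ω =>
      {ω | f ω = 1}.indicator (fun ω => Φ 1 (g ω)) ω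
        + {ω | f ω = -1}.indicator (fun ω => Φ (-1) (g ω)) ω := by
    filter_upwards [hfair.ae_eq_one_or_neg_one hf] with ω hω
    rcases hω with h | h <;> simp [h]
  rw [integral_congr_ae hsplit, integral_add (hint₁.indicator (hA 1)) (hint₂.indicator (hA (-1))),
    integral_indicator (hA 1), integral_indicator (hA (-1)), hpiece, hpiece, hhalf 1 hfair.1,
    hhalf (-1) hfair.2, integral_div, integral_add hint₁ hint₂]
  ring

theorem IsRademacherSeq.integral_comp_eq_average {η : ℕ → Ω → ℤ} (hη : IsRademacherSeq P η)
    {j : ℕ} {S : Finset ℕ} (hj : j ∉ S) {G : ℤ → (ℕ → ℤ) → ℝ} (hG : ∀ e, DependsOn (G e) S)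
    (hint₁ : Integrable (fun ω => G 1 (η · ω)) P) (hint₂ : Integrable (fun ω => G (-1) (η · ω)) P) :
    ∫ ω, G (η j ω) (η · ω) ∂P = ∫ ω, (G 1 (η · ω) + G (-1) (η · ω)) / 2 ∂P := by
  choose Φ hΦ using fun e => dependsOn_iff_exists_comp.1 (hG e)
  have hGg : ∀ e ω, G e (η · ω) = Φ e (fun i : S => η i ω) := fun e ω => by rw [hΦ e]; rfl
  have hind : IndepFun (η j) (fun ω (i : S) => η i ω) P :=
    (hη.iIndepFun.indepFun_finset {j} S (Finset.disjoint_singleton_left.2 hj) hη.measurable).comp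
      (measurable_pi_apply (⟨j, Finset.mem_singleton_self j⟩ : ({j} : Finset ℕ))) measurable_id
  simp only [hGg] at hint₁ hint₂ ⊢
  exact (hη.fairSign j).integral_comp_eq_average (g := fun ω (i : S) => η i ω) (hη.measurable j)
    (measurable_pi_lambda _ fun i => hη.measurable i) hind (fun _ => measurable_of_countable _)
    hint₁ hint₂

end Rademacher

def SolvesHeatEqOn (D : Set (ℕ × ℤ)) (f : ℕ → ℤ → ℝ) : Prop :=
  ∀ t y, (t + 1, y) ∈ D → f (t + 1) y = (f t (y + 1) + f t (y - 1)) / 2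

theorem revHitBy_walk_succ {Ω : Type*} {η : ℕ → Ω → ℤ} {D : Set (ℕ × ℤ)} {T : ℕ} {y : ℤ}
    {ω : Ω} (h : (T + 1, y) ∈ D) :
    revHitBy D (walk η y) (T + 1) ω
      = revHitBy D (walk (fun i => η (i + 1)) (y + η 0 ω)) T ω + 1 := by
  rw [revHitBy_succ (by simpa using h)]
  exact congrArg (· + 1) (revHitBy_congr fun t _ => walk_succ')

theorem integrable_comp_revHitBy {P : Measure Ω} [IsProbabilityMeasure P] {η : ℕ → Ω → ℤ}
    (hη : IsRademacherSeq P η) (D : Set (ℕ × ℤ)) (f : ℕ → ℤ → ℝ) (T : ℕ) (y : ℤ) :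
    Integrable (fun ω => f (T - revHitBy D (walk η y) T ω)
      (walk η y (revHitBy D (walk η y) T ω) ω)) P := by
  let τ : (ℕ → ℤ) → ℕ := revHitBy D (walk (fun i (u : ℕ → ℤ) => u i) y) T
  have hG : DependsOn (fun u => f (T - τ u) (walk (fun i (u : ℕ → ℤ) => u i) y (τ u) u))
      (Finset.range T) := fun u v h => by
    have hw : ∀ t ≤ T, walk (fun i (u : ℕ → ℤ) => u i) y t u = walk (fun i u => u i) y t v :=
      fun t ht => walk_congr_of_forall_mem_range (by simpa using h) ht
    simp only [τ, revHitBy_congr hw, hw _ (revHitBy_le T)]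
  refine Integrable.of_bound (hG.measurable_comp hη.measurable).aestronglyMeasurable
    (∑ p ∈ Finset.range (T + 1) ×ˢ Finset.Icc (y - T) (y + T), |f p.1 p.2|) ?_
  filter_upwards [hη.ae_sign] with ω hω
  have hτ := revHitBy_le (D := D) (Z := walk η y) (ω := ω) T
  have hY := abs_le.1 (abs_walk_sub_le (x := y) (t := revHitBy D (walk η y) T ω) hω)
  rw [Real.norm_eq_abs]
  refine Finset.single_le_sum (f := fun p : ℕ × ℤ => |f p.1 p.2|) (fun _ _ => abs_nonneg _)
    (a := (T - revHitBy D (walk η y) T ω, walk η y (revHitBy D (walk η y) T ω) ω))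
    (Finset.mem_product.2 ⟨Finset.mem_range.2 (by omega), Finset.mem_Icc.2 ⟨?_, ?_⟩⟩) <;> omega

theorem SolvesHeatEqOn.integral_comp_revHitBy {D : Set (ℕ × ℤ)} {f : ℕ → ℤ → ℝ}
    (hf : SolvesHeatEqOn D f) {P : Measure Ω} [IsProbabilityMeasure P] {η : ℕ → Ω → ℤ}
    (hη : IsRademacherSeq P η) (T : ℕ) (y : ℤ) :
    ∫ ω, f (T - revHitBy D (walk η y) T ω) (walk η y (revHitBy D (walk η y) T ω) ω) ∂P
      = f T y := by
  induction T generalizing η y with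
  | zero => simp [Nat.le_zero.1 (revHitBy_le 0)]
  | succ T ih =>
    by_cases hy : (T + 1, y) ∈ D
    swap
    · have h0 : ∀ ω, revHitBy D (walk η y) (T + 1) ω = 0 := fun ω =>
        revHitBy_eq_zero (by simpa using hy)
      simp [h0]
    let τ : ℤ → (ℕ → ℤ) → ℕ := fun x u => revHitBy D (walk (fun i (u : ℕ → ℤ) => u (i + 1)) x) T u
    let G : ℤ → (ℕ → ℤ) → ℝ := fun e u =>
      f (T - τ (y + e) u) (walk (fun i (u : ℕ → ℤ) => u (i + 1)) (y + e) (τ (y + e) u) u)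
    have hstep : ∀ ω, f (T + 1 - revHitBy D (walk η y) (T + 1) ω)
        (walk η y (revHitBy D (walk η y) (T + 1) ω) ω) = G (η 0 ω) (η · ω) := fun ω => by
      rw [revHitBy_walk_succ hy, walk_succ', Nat.add_sub_add_right]
      rfl
    have hG : ∀ e, DependsOn (G e) (Finset.Ioc 0 T) := fun e u v h => by
      have hw : ∀ t ≤ T, walk (fun i (u : ℕ → ℤ) => u (i + 1)) (y + e) t u
          = walk (fun i (u : ℕ → ℤ) => u (i + 1)) (y + e) t v :=
        fun t ht => walk_congr fun i hi => h (i + 1) (by simp; omega)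
      simp only [G, τ, revHitBy_congr hw, hw _ (revHitBy_le T)]
    have hint : ∀ e, Integrable (fun ω => G e (η · ω)) P := fun e =>
      integrable_comp_revHitBy hη.shift D f T (y + e)
    have hIH : ∀ e, ∫ ω, G e (η · ω) ∂P = f T (y + e) := fun e => ih hη.shift (y + e)
    calc _ = ∫ ω, G (η 0 ω) (η · ω) ∂P := integral_congr_ae (ae_of_all _ hstep)
      _ = ∫ ω, (G 1 (η · ω) + G (-1) (η · ω)) / 2 ∂P :=
        hη.integral_comp_eq_average (by simp) hG (hint 1) (hint (-1))
      _ = (f T (y + 1) + f T (y - 1)) / 2 := by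
        rw [integral_div, integral_add (hint 1) (hint (-1)), hIH, hIH, ← sub_eq_add_neg]
      _ = f (T + 1) y := (hf T y hy).symm

open Classical in
theorem IsRademacherSeq.integral_comp_stoppedWalk_succ {P : Measure Ω} [IsProbabilityMeasure P]
    {ξ : ℕ → Ω → ℤ} (hξ : IsRademacherSeq P ξ) (D : Set (ℕ × ℤ)) (φ : ℤ → ℝ) (x : ℤ) (T : ℕ) :
    ∫ ω, φ (stoppedWalk ξ D (T + 1) x ω) ∂P
      = ∫ ω, (φ (stoppedWalk ξ D T x ω + if StaysIn D (walk ξ x) T ω then 1 else 0)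
          + φ (stoppedWalk ξ D T x ω + if StaysIn D (walk ξ x) T ω then -1 else 0)) / 2 ∂P := by
  let G : ℤ → (ℕ → ℤ) → ℝ := fun e u => φ (stoppedWalk (fun i (u : ℕ → ℤ) => u i) D T x u
    + if StaysIn D (walk (fun i (u : ℕ → ℤ) => u i) x) T u then e else 0)
  have hstep : ∀ ω, φ (stoppedWalk ξ D (T + 1) x ω) = G (ξ T ω) (ξ · ω) := fun ω => by
    by_cases hs : StaysIn D (walk ξ x) T ω
    · change _ = φ (_ + if StaysIn D (walk ξ x) T ω then ξ T ω else 0)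
      rw [stoppedWalk_succ_of_staysIn hs, if_pos hs]
      rfl
    · change _ = φ (_ + if StaysIn D (walk ξ x) T ω then ξ T ω else 0)
      rw [stoppedWalk_succ_of_not_staysIn hs, if_neg hs, add_zero]
      rfl
  have hG : ∀ e, DependsOn (G e) (Finset.range T) := fun e u v h => by
    simp only [G, dependsOn_stoppedWalk h, dependsOn_staysIn h]
  have hint : ∀ e : ℤ, |e| ≤ 1 → Integrable (fun ω => φ (stoppedWalk ξ D T x ω
      + if StaysIn D (walk ξ x) T ω then e else 0)) P := fun e he => by
    refine Integrable.of_bound ((hG e).measurable_comp hξ.measurable).aestronglyMeasurable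
      (∑ w ∈ Finset.Icc (x - (T + 1)) (x + (T + 1)), |φ w|) ?_
    filter_upwards [hξ.ae_sign] with ω hω
    have hτ := hitBy_le (D := D) (Z := walk ξ x) (ω := ω) T
    have hX := abs_le.1 (abs_walk_sub_le (x := x) (t := hitBy D (walk ξ x) T ω) hω)
    rw [Real.norm_eq_abs]
    refine Finset.single_le_sum (f := fun w => |φ w|) (fun _ _ => abs_nonneg _)
      (Finset.mem_Icc.2 ?_)
    rw [abs_le] at he
    unfold stoppedWalk
    split_ifs <;> constructor <;> omega
  exact (integral_congr_ae (ae_of_all _ hstep)).trans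
    (hξ.integral_comp_eq_average (by simp) hG (hint 1 (by norm_num)) (hint (-1) (by norm_num)))

theorem integrable_cast_abs_sub {α : Type*} [MeasurableSpace α] {μ : Measure α}
    [IsFiniteMeasure μ] {X : α → ℤ} (hX : Integrable (fun a => (X a : ℝ)) μ) (z : ℤ) :
    Integrable (fun a => ((|z - X a| : ℤ) : ℝ)) μ :=
  ((integrable_const (z : ℝ)).sub hX).abs.congr (ae_of_all _ fun a => by push_cast; rfl)

theorem potential_eq_neg_integral {m : Measure ℤ} [IsFiniteMeasure m] (hm : FiniteFirstMoment m)
    (z : ℤ) : potential m z = -∫ w, ((|z - w| : ℤ) : ℝ) ∂m := by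
  have hint : Integrable (fun w : ℤ => ((|z - w| : ℤ) : ℝ)) m := integrable_cast_abs_sub hm z
  rw [potential, integral_countable hint]
  simp [measureReal_def, mul_comm]

theorem potential_map {α : Type*} [MeasurableSpace α] {μ : Measure α} [IsFiniteMeasure μ]
    {X : α → ℤ} (hX : AEMeasurable X μ) (hint : Integrable (fun a => (X a : ℝ)) μ) (z : ℤ) :
    potential (μ.map X) z = -∫ a, ((|z - X a| : ℤ) : ℝ) ∂μ := by
  have hm : FiniteFirstMoment (μ.map X) :=
    (integrable_map_measure (measurable_of_countable _).aestronglyMeasurable hX).2 hint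
  rw [potential_eq_neg_integral hm,
    integral_map hX (measurable_of_countable _).aestronglyMeasurable]

theorem tendsto_potential_map_of_uniformIntegrable {α : Type*} [MeasurableSpace α]
    {μ : Measure α} [IsFiniteMeasure μ] {X : ℕ → α → ℤ} {Y : α → ℤ}
    (hX : ∀ n, AEMeasurable (X n) μ) (hUI : UniformIntegrable (fun n a => (X n a : ℝ)) 1 μ)
    (hlim : ∀ᵐ a ∂μ, ∀ᶠ n in atTop, X n a = Y a) (z : ℤ) :
    Tendsto (fun n => potential (μ.map (X n)) z) atTop
      (𝓝 (potential (μ.map Y) z)) := by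
  have hlimR : ∀ᵐ a ∂μ, Tendsto (fun n => (X n a : ℝ)) atTop (𝓝 (Y a : ℝ)) :=
    hlim.mono fun a ha => tendsto_const_nhds.congr' (ha.mono fun n hn => by simp [hn])
  have hY : AEMeasurable Y μ := aemeasurable_of_tendsto_metrizable_ae' hX
    (hlim.mono fun a ha => tendsto_const_nhds.congr' (ha.mono fun n hn => hn.symm))
  have hint : ∀ n, Integrable (fun a => (X n a : ℝ)) μ :=
    fun n => memLp_one_iff_integrable.1 (hUI.memLp n)
  have hintY : Integrable (fun a => (Y a : ℝ)) μ := hUI.integrable_of_ae_tendsto hlimR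
  simp only [potential_map (hX _) (hint _), potential_map hY hintY]
  refine (tendsto_integral_of_L1' _ (integrable_cast_abs_sub hintY z).aestronglyMeasurable
    (Eventually.of_forall fun n => integrable_cast_abs_sub (hint n) z) ?_).neg
  have hL1 := tendsto_Lp_finite_of_tendsto_ae le_rfl ENNReal.one_ne_top hUI.1
    (memLp_one_iff_integrable.2 hintY) hUI.2.1 hlimR
  refine tendsto_of_tendsto_of_tendsto_of_le_of_le tendsto_const_nhds hL1 (fun _ => zero_le)
    fun n => eLpNorm_mono fun a => ?_
  simp only [Pi.sub_apply, Real.norm_eq_abs]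
  push_cast
  calc _ ≤ |((z : ℝ) - X n a) - (z - Y a)| := abs_abs_sub_abs_le_abs_sub _ _
    _ = _ := by rw [abs_sub_comm]; ring_nf


theorem integral_prod_congr {α β : Type*} [MeasurableSpace α] [MeasurableSpace β]
    {μ : Measure α} {ν : Measure β} [SFinite μ] [SFinite ν] {f g : α × β → ℝ}
    (hf : Integrable f (μ.prod ν)) (hg : Integrable g (μ.prod ν))
    (h : ∀ x, ∫ y, f (x, y) ∂ν = ∫ y, g (x, y) ∂ν) :
    ∫ p, f p ∂(μ.prod ν) = ∫ p, g p ∂(μ.prod ν) := by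
  rw [integral_prod f hf, integral_prod g hg]
  simp only [h]

section RootLaws

variable {P : Measure Ω} {ξ : ℕ → Ω → ℤ} {D : Set (ℕ × ℤ)} {lam : Measure ℤ}

theorem muRootT_zero [IsProbabilityMeasure P] : muRootT P ξ D lam 0 = lam := by
  change (lam.prod P).map (fun p => stoppedWalk ξ D 0 p.1 p.2) = lam
  simp only [stoppedWalk_zero]
  rw [Measure.map_fst_prod, measure_univ, one_smul]

theorem measurable_stoppedWalk (hξ : ∀ n, Measurable (ξ n)) (T : ℕ) :
    Measurable fun p : ℤ × Ω => stoppedWalk ξ D T p.1 p.2 :=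
  measurable_from_prod_countable_right fun _ => dependsOn_stoppedWalk.measurable_comp hξ

variable [IsProbabilityMeasure P] [IsProbabilityMeasure lam]

variable (hUI : UniformIntegrable (fun t (p : ℤ × Ω) => (stoppedWalk ξ D t p.1 p.2 : ℝ)) 1
  (lam.prod P))
include hUI

theorem integrable_abs_sub_stoppedWalk (T : ℕ) (z : ℤ) :
    Integrable (fun p : ℤ × Ω => ((|z - stoppedWalk ξ D T p.1 p.2| : ℤ) : ℝ)) (lam.prod P) :=
  integrable_cast_abs_sub (memLp_one_iff_integrable.1 (hUI.memLp T)) z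

theorem potential_muRootT (hξ : ∀ n, Measurable (ξ n)) (T : ℕ) (z : ℤ) :
    potential (muRootT P ξ D lam T) z
      = -∫ p, ((|z - stoppedWalk ξ D T p.1 p.2| : ℤ) : ℝ) ∂(lam.prod P) :=
  potential_map (measurable_stoppedWalk hξ T).aemeasurable
    (memLp_one_iff_integrable.1 (hUI.memLp T)) z

theorem solvesHeatEqOn_potential_muRootT (hD : IsRootCont D) (hξ : IsRademacherSeq P ξ) :
    SolvesHeatEqOn D fun t => potential (muRootT P ξ D lam t) := by
  intro T y hy
  have hx : ∀ x, ∫ ω, ((|y - stoppedWalk ξ D (T + 1) x ω| : ℤ) : ℝ) ∂P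
      = ∫ ω, (((|y + 1 - stoppedWalk ξ D T x ω| : ℤ) : ℝ)
        + ((|y - 1 - stoppedWalk ξ D T x ω| : ℤ) : ℝ)) / 2 ∂P := by
    intro x
    rw [hξ.integral_comp_stoppedWalk_succ D (fun w => ((|y - w| : ℤ) : ℝ))]
    refine integral_congr_ae (ae_of_all _ fun ω => ?_)
    dsimp only
    set X := stoppedWalk ξ D T x ω
    by_cases hs : StaysIn D (walk ξ x) T ω
    · simp only [if_pos hs]
      rw [add_comm, show y - (X + -1) = y + 1 - X by ring, show y - (X + 1) = y - 1 - X by ring]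
    · have hne : X ≠ y := by
        intro heq
        have hle := hitBy_le (D := D) (Z := walk ξ x) (ω := ω) T
        apply not_mem_of_not_staysIn hs
        rw [show stoppedWalk ξ D T x ω = y from heq]
        exact hD.mem_of_le hy (by omega)
      have key : |y + 1 - X| + |y - 1 - X| = 2 * |y - X| := by simp only [abs_eq_max_neg]; omega
      simp only [if_neg hs, add_zero]
      congr 1
      exact_mod_cast (key.trans (two_mul _)).symm
  have hint := integrable_abs_sub_stoppedWalk hUI
  show potential (muRootT P ξ D lam (T + 1)) y
    = (potential (muRootT P ξ D lam T) (y + 1) + potential (muRootT P ξ D lam T) (y - 1)) / 2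
  rw [potential_muRootT hUI hξ.measurable, potential_muRootT hUI hξ.measurable,
    potential_muRootT hUI hξ.measurable,
    integral_prod_congr (g := fun p => (((|y + 1 - stoppedWalk ξ D T p.1 p.2| : ℤ) : ℝ)
        + ((|y - 1 - stoppedWalk ξ D T p.1 p.2| : ℤ) : ℝ)) / 2)
      (hint (T + 1) y) (((hint T (y + 1)).add (hint T (y - 1))).div_const 2) hx,
    integral_div, integral_add (hint T (y + 1)) (hint T (y - 1))]
  ring

theorem potential_muRootT_succ_of_not_mem (hD : IsRootCont D) (hξ : IsRademacherSeq P ξ)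
    {r s : ℕ} {z : ℤ} (hz : (r, z) ∉ D) (hrs : r ≤ s) :
    potential (muRootT P ξ D lam (s + 1)) z = potential (muRootT P ξ D lam s) z := by
  have hx : ∀ x, ∫ ω, ((|z - stoppedWalk ξ D (s + 1) x ω| : ℤ) : ℝ) ∂P
      = ∫ ω, ((|z - stoppedWalk ξ D s x ω| : ℤ) : ℝ) ∂P := by
    intro x
    rw [hξ.integral_comp_stoppedWalk_succ D (fun w => ((|z - w| : ℤ) : ℝ))]
    refine integral_congr_ae (ae_of_all _ fun ω => ?_)
    dsimp only
    set X := stoppedWalk ξ D s x ω with hX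
    by_cases hs : StaysIn D (walk ξ x) s ω
    · have hne : X ≠ z := by
        rw [hX, stoppedWalk_of_staysIn hs]
        exact fun heq => hz (hD.mem_of_le (heq ▸ hs s le_rfl) hrs)
      have key : |z - (X + 1)| + |z - (X + -1)| = 2 * |z - X| := by
        simp only [abs_eq_max_neg]; omega
      simp only [if_pos hs]
      rw [div_eq_iff two_ne_zero]
      exact_mod_cast key.trans (mul_comm _ _)
    · simp only [if_neg hs, add_zero]
      ring
  have hint := integrable_abs_sub_stoppedWalk hUI
  rw [potential_muRootT hUI hξ.measurable, potential_muRootT hUI hξ.measurable,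
    integral_prod_congr (hint (s + 1) z) (hint s z) hx]

theorem potential_muRootT_of_not_mem (hD : IsRootCont D) (hξ : IsRademacherSeq P ξ)
    (hfin : ∀ᵐ p ∂(lam.prod P), ∃ t, (t, walk ξ p.1 t p.2) ∉ D) {r : ℕ} {z : ℤ}
    (hz : (r, z) ∉ D) :
    potential (muRootT P ξ D lam r) z = potential (muRoot P ξ D lam) z := by
  have hconst : ∀ s ≥ r, potential (muRootT P ξ D lam s) z = potential (muRootT P ξ D lam r) z := by
    intro s hs
    induction s, hs using Nat.le_induction with
    | base => rfl
    | succ s hrs ih => exact (potential_muRootT_succ_of_not_mem hUI hD hξ hz hrs).trans ih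
  have hlim := tendsto_potential_map_of_uniformIntegrable
    (fun n => (measurable_stoppedWalk (D := D) hξ.measurable n).aemeasurable) hUI
    (hfin.mono fun p hp => eventually_atTop.2 ⟨_, fun _ hn => stoppedWalk_eq_walkAtExit hp hn⟩) z
  exact tendsto_nhds_unique (tendsto_const_nhds.congr'
    (eventually_atTop.2 ⟨r, fun s hs => (hconst s hs).symm⟩)) hlim

end RootLaws

theorem root_optimal_stopping_value_general
    (P : Measure Ω) [IsProbabilityMeasure P] (ξ η : ℕ → Ω → ℤ)
    (h : IndepSSRWIncrements P ξ η)
    (D : Set (ℕ × ℤ)) (hD : IsRootCont D)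
    (lam : Measure ℤ) [IsProbabilityMeasure lam]
    (T : ℕ)
    (hfin : ∀ᵐ p ∂(lam.prod P), ∃ t, (t, walk ξ p.1 t p.2) ∉ D)
    (hUI : UniformIntegrable
      (fun (t : ℕ) (p : ℤ × Ω) => ((walk ξ p.1 (hitBy D (walk ξ p.1) t p.2) p.2 : ℤ) : ℝ))
      1 (lam.prod P))
    (y : ℤ) :
    potential (muRootT P ξ D lam T) y
      = ∫ ω,
          ((if revHitBy D (walk η y) T ω < T then
              potential (muRoot P ξ D lam) (walk η y (revHitBy D (walk η y) T ω) ω)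
            else 0)
          + (if revHitBy D (walk η y) T ω = T then
              potential lam (walk η y (revHitBy D (walk η y) T ω) ω)
            else 0)) ∂P := by
  have hξ := h.isRademacherSeq_left
  rw [← (solvesHeatEqOn_potential_muRootT hUI hD hξ).integral_comp_revHitBy
    h.isRademacherSeq_right T y]
  refine integral_congr_ae (ae_of_all _ fun ω => ?_)
  dsimp only
  rcases (revHitBy_le (D := D) (Z := walk η y) (ω := ω) T).lt_or_eq with hlt | heq
  · rw [if_pos hlt, if_neg hlt.ne, add_zero,
      potential_muRootT_of_not_mem hUI hD hξ hfin (not_mem_of_revHitBy_lt hlt)]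
  · rw [if_neg heq.not_lt, if_pos heq, zero_add, heq, Nat.sub_self, muRootT_zero]

/-- for every `y ∈ ℤ`,
`U_{μ^{Root}_T}(y) = E_y[U_{μ^{Root}}(Y_{τ*}) 1_{τ* < T} + U_λ(Y_{τ*}) 1_{τ* = T}]`. -/
theorem root_optimal_stopping_value
    (P : Measure Ω) [IsProbabilityMeasure P] (ξ η : ℕ → Ω → ℤ)
    (h : IndepSSRWIncrements P ξ η)
    (D : Set (ℕ × ℤ)) (hD : IsRootCont D)
    (lam : Measure ℤ) [IsProbabilityMeasure lam] (hlam : FiniteFirstMoment lam)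
    (T : ℕ)
    (hfin : ∀ᵐ p ∂(lam.prod P), ∃ t, (t, walk ξ p.1 t p.2) ∉ D)
    (hUI : UniformIntegrable
      (fun (t : ℕ) (p : ℤ × Ω) => ((walk ξ p.1 (hitBy D (walk ξ p.1) t p.2) p.2 : ℤ) : ℝ))
      1 (lam.prod P))
    (y : ℤ) :
    potential (muRootT P ξ D lam T) y
      = ∫ ω,
          ((if revHitBy D (walk η y) T ω < T then
              potential (muRoot P ξ D lam) (walk η y (revHitBy D (walk η y) T ω) ω)
            else 0)
          + (if revHitBy D (walk η y) T ω = T then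
              potential lam (walk η y (revHitBy D (walk η y) T ω) ω)
            else 0)) ∂P :=
  root_optimal_stopping_value_general P ξ η h D hD lam T hfin hUI y

end SwitchingIdentities
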